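/- arXiv:2407.06580 — 2 statements merged into one kernel-verified Lean document; each statement's English description precedes it below -/
import Mathlib

section
/- Let A be a nonempty finite set and let q, s : A → ℝ satisfy s(a) > 0 for all a ∈ A. For a ∈ A and γ ≥ 0 define g(a, γ) = log(1 + γ·s(a)) − q(a)·γ/(1 + γ·s(a)). Suppose the set B = {a ∈ A : q(a) > s(a)} is nonempty, let a* ∈ B satisfy q(a*)/s(a*) ≥ q(a)/s(a) for all a ∈ B, and set γ* = (q(a*) − s(a*))/s(a*)². Then g(a*, γ*) ≤ g(a, γ) for every a ∈ A and every γ ≥ 0; that is, the pair (a*, γ*) jointly minimizes g over A × [0, ∞). -/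
lemma aux_log_ge {x : ℝ} (hx : 0 < x) : 1 - 1/x ≤ Real.log x := by
  have h := Real.log_le_sub_one_of_pos (show (0:ℝ) < 1/x by positivity)
  rw [Real.log_div one_ne_zero (ne_of_gt hx), Real.log_one] at h
  linarith

/-- Correctness of the grid refinement and adjustment step (Step 2.2) of GRASBI:
over a nonempty finite set `A` of candidate grid points with sensitivities `s(a) > 0`,
if `B = {a : q(a) > s(a)}` is nonempty and `a* ∈ B` maximizes `q/s` over `B`, then the
pair `(a*, γ*)` with `γ* = (q(a*) − s(a*))/s(a*)²` jointly minimizes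
`g(a, γ) = log(1 + γ·s(a)) − q(a)·γ/(1 + γ·s(a))` over `A × [0,∞)`. -/
theorem stmt_8 (A : Type*) [Fintype A] [Nonempty A]
    (q s : A → ℝ) (hs : ∀ a, 0 < s a)
    (g : A → ℝ → ℝ)
    (hg : ∀ (a : A) (γ : ℝ), 0 ≤ γ →
      g a γ = Real.log (1 + γ * s a) - q a * γ / (1 + γ * s a))
    (astar : A) (hastar : s astar < q astar)
    (hmax : ∀ a : A, s a < q a → q a / s a ≤ q astar / s astar) :
    ∀ (a : A) (γ : ℝ), 0 ≤ γ →
      g astar ((q astar - s astar) / (s astar) ^ 2) ≤ g a γ := by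
  intro a γ hγ
  have hsS := hs astar
  have hsa := hs a
  have hqS : 0 < q astar := lt_trans hsS hastar
  have hγs0 : 0 ≤ (q astar - s astar) / (s astar) ^ 2 :=
    div_nonneg (by linarith) (by positivity)
  rw [hg astar _ hγs0, hg a γ hγ]
  have ht0 : (0:ℝ) < 1 + γ * s a := by nlinarith
  have ht1 : (1:ℝ) ≤ 1 + γ * s a := by nlinarith
  have hr1 : 1 < q astar / s astar := (one_lt_div hsS).mpr hastar
  have hLHS : Real.log (1 + (q astar - s astar) / (s astar) ^ 2 * s astar)
      - q astar * ((q astar - s astar) / (s astar) ^ 2)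
        / (1 + (q astar - s astar) / (s astar) ^ 2 * s astar)
      = Real.log (q astar / s astar) + 1 - q astar / s astar := by
    have h1 : 1 + (q astar - s astar) / (s astar) ^ 2 * s astar = q astar / s astar := by
      field_simp; ring
    rw [h1]
    have h2 : q astar * ((q astar - s astar) / (s astar) ^ 2) / (q astar / s astar)
        = q astar / s astar - 1 := by
      field_simp
    rw [h2]; ring
  rw [hLHS]
  set t : ℝ := 1 + γ * s a with htdef
  by_cases hcase : s a < q a
  · -- big case
    have hra1 : 1 < q a / s a := (one_lt_div hsa).mpr hcase
    have hrab : q a / s a ≤ q astar / s astar := hmax a hcase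
    have hra0 : 0 < q a / s a := by linarith
    have hA : 1 - (q a / s a) / t ≤ Real.log t - Real.log (q a / s a) := by
      have := aux_log_ge (show (0:ℝ) < t / (q a / s a) by positivity)
      rw [Real.log_div (ne_of_gt ht0) (ne_of_gt hra0)] at this
      have hh : 1 / (t / (q a / s a)) = (q a / s a) / t := one_div_div _ _
      rw [hh] at this; linarith
    have hB : Real.log (q astar / s astar) - Real.log (q a / s a)
        ≤ q astar / s astar - q a / s a := by
      have h3 := Real.log_le_sub_one_of_pos
        (show (0:ℝ) < (q astar / s astar) / (q a / s a) by positivity)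
      rw [Real.log_div (by linarith : q astar / s astar ≠ 0) (ne_of_gt hra0)] at h3
      have key : (q astar / s astar) / (q a / s a) ≤ q astar / s astar - q a / s a + 1 := by
        rw [div_le_iff₀ hra0]; nlinarith
      linarith
    have hC : q a * γ / t = q a / s a - (q a / s a) / t := by
      rw [htdef]; field_simp; ring
    rw [hC]; linarith
  · -- q a ≤ s a
    push_neg at hcase
    have h4 : q a * γ / t ≤ 1 - 1/t := by
      rw [div_le_iff₀ ht0]
      have h4a : q a * γ ≤ s a * γ := mul_le_mul_of_nonneg_right hcase hγ
      have h4b : (1 - 1/t) * t = t - 1 := by field_simp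
      nlinarith [h4a, h4b, htdef]
    have h5 := aux_log_ge ht0
    have h6 := Real.log_le_sub_one_of_pos (show (0:ℝ) < q astar / s astar by linarith)
    linarith
end

section
/- Let n be a positive integer, let C₋ be an n×n complex Hermitian positive definite matrix, let y ∈ ℂⁿ, let A be a nonempty finite set, and let φ : A → ℂⁿ with φ(a) ≠ 0 for all a ∈ A. For a ∈ A define s(a) = φ(a)^H C₋⁻¹ φ(a), a strictly positive real, and q(a) = |φ(a)^H C₋⁻¹ y|², and for γ ≥ 0 define the real number F(a, γ) = log det(C₋ + γ·φ(a)φ(a)^H) + y^H (C₋ + γ·φ(a)φ(a)^H)⁻¹ y. Suppose B = {a ∈ A : q(a) > s(a)} is nonempty, let a* ∈ B satisfy q(a*)/s(a*) ≥ q(a)/s(a) for all a ∈ B, and set γ* = (q(a*) − s(a*))/s(a*)². Then F(a*, γ*) ≤ F(a, γ) for every a ∈ A and every γ ≥ 0. -/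
/-!
By the matrix determinant lemma and the Sherman–Morrison formula,
`F(a, γ) = log |C₋| + yᴴ C₋⁻¹ y + log (1 + γ s) - γ q / (1 + γ s)` with `s = s(a)`, `q = q(a)`.
Put `T = q(a*) / s(a*) > 1`; the choice of `a*` gives `q(a) ≤ T s(a)` for every `a`
(trivially when `q(a) ≤ s(a)`). With `u = 1 + γ s` the rank-one term is then at least
`log u - T + T / u ≥ log T - (T - 1)`, by `log (T / u) ≤ T / u - 1`, and `γ*` attains this
bound because `1 + γ* s(a*) = T`.
-/

open Matrix ComplexOrder

namespace Matrix

variable {m K : Type*} [Fintype m]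

theorem IsHermitian.star_dotProduct_mulVec {M : Matrix m m ℂ} (hM : M.IsHermitian)
    (x y : m → ℂ) : star (star x ⬝ᵥ M *ᵥ y) = star y ⬝ᵥ M *ᵥ x := by
  rw [← star_dotProduct, star_mulVec, hM.eq, ← dotProduct_mulVec]

variable [DecidableEq m]

theorem det_add_vecMulVec [CommRing K] {A : Matrix m m K} (hA : IsUnit A.det) (u v : m → K) :
    (A + vecMulVec u v).det = A.det * (1 + v ⬝ᵥ A⁻¹ *ᵥ u) := by
  rw [vecMulVec_eq Unit, det_add_replicateCol_mul_replicateRow hA]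
  congr 1
  rw [det_unique, add_apply, one_apply_eq, Matrix.mul_assoc, ← replicateCol_mulVec,
    replicateRow_mul_replicateCol_apply]

theorem inv_add_vecMulVec [Field K] {A : Matrix m m K} (hA : IsUnit A.det) (u v : m → K)
    (hc : 1 + v ⬝ᵥ A⁻¹ *ᵥ u ≠ 0) :
    (A + vecMulVec u v)⁻¹ =
      A⁻¹ - (1 + v ⬝ᵥ A⁻¹ *ᵥ u)⁻¹ • vecMulVec (A⁻¹ *ᵥ u) (v ᵥ* A⁻¹) := by
  refine inv_eq_right_inv ?_
  set c := 1 + v ⬝ᵥ A⁻¹ *ᵥ u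
  have hA_mul : A * vecMulVec (A⁻¹ *ᵥ u) (v ᵥ* A⁻¹) = vecMulVec u (v ᵥ* A⁻¹) := by
    rw [mul_vecMulVec, mulVec_mulVec, mul_nonsing_inv A hA, one_mulVec]
  have hvec_mul : vecMulVec u v * vecMulVec (A⁻¹ *ᵥ u) (v ᵥ* A⁻¹) =
      (c - 1) • vecMulVec u (v ᵥ* A⁻¹) := by
    rw [vecMulVec_mul_vecMulVec, vecMulVec_smul, add_sub_cancel_left]
  rw [add_mul, mul_sub, mul_sub, Matrix.mul_smul, Matrix.mul_smul, hA_mul, hvec_mul,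
    mul_nonsing_inv A hA, vecMulVec_mul, smul_smul,
    show c⁻¹ * (c - 1) = 1 - c⁻¹ by field_simp, sub_smul, one_smul]
  abel

theorem dotProduct_inv_add_vecMulVec_mulVec [Field K] {A : Matrix m m K} (hA : IsUnit A.det)
    (u v x y : m → K) (hc : 1 + v ⬝ᵥ A⁻¹ *ᵥ u ≠ 0) :
    x ⬝ᵥ (A + vecMulVec u v)⁻¹ *ᵥ y =
      x ⬝ᵥ A⁻¹ *ᵥ y - (x ⬝ᵥ A⁻¹ *ᵥ u) * (v ⬝ᵥ A⁻¹ *ᵥ y) / (1 + v ⬝ᵥ A⁻¹ *ᵥ u) := by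
  rw [inv_add_vecMulVec hA u v hc, sub_mulVec, dotProduct_sub, smul_mulVec, dotProduct_smul,
    vecMulVec_mulVec, ← dotProduct_mulVec]
  simp [dotProduct_smul, div_eq_inv_mul, mul_comm]

end Matrix

section RankOneObjective

variable {m : Type*} [Fintype m] [DecidableEq m]

/-- The objective `log |C| + yᴴ C⁻¹ y` of the paper at `C = C₋ + γ vvᴴ`; both terms are real
for positive definite `C`, so taking real parts loses nothing. -/
noncomputable def rankOneObjective (C : Matrix m m ℂ) (y v : m → ℂ) (γ : ℝ) : ℝ :=
  Real.log ((C + (γ : ℂ) • vecMulVec v (star v)).det.re) +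
    (star y ⬝ᵥ (C + (γ : ℂ) • vecMulVec v (star v))⁻¹ *ᵥ y).re

theorem rankOneObjective_eq {C : Matrix m m ℂ} (hC : C.PosDef) (y v : m → ℂ) {γ s : ℝ}
    (hγ : 0 ≤ γ) (hs : (s : ℂ) = star v ⬝ᵥ C⁻¹ *ᵥ v) :
    rankOneObjective C y v γ = Real.log C.det.re + (star y ⬝ᵥ C⁻¹ *ᵥ y).re +
      (Real.log (1 + γ * s) - γ * ‖star v ⬝ᵥ C⁻¹ *ᵥ y‖ ^ 2 / (1 + γ * s)) := by
  have hdet : IsUnit C.det := hC.isUnit.map detMonoidHom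
  have hs_nonneg : 0 ≤ s := by
    have := hC.inv.posSemidef.dotProduct_mulVec_nonneg v
    rwa [← hs, Complex.zero_le_real] at this
  have hu : 0 < 1 + γ * s := by positivity
  have hc : 1 + star v ⬝ᵥ C⁻¹ *ᵥ ((γ : ℂ) • v) = ((1 + γ * s : ℝ) : ℂ) := by
    rw [mulVec_smul, dotProduct_smul, ← hs, smul_eq_mul]
    push_cast
    ring
  have hc_ne : 1 + star v ⬝ᵥ C⁻¹ *ᵥ ((γ : ℂ) • v) ≠ 0 := by
    rw [hc]
    exact_mod_cast hu.ne'
  have hC_re : 0 < C.det.re := (Complex.lt_def.mp hC.det_pos).1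
  set w := star v ⬝ᵥ C⁻¹ *ᵥ y
  unfold rankOneObjective
  rw [← smul_vecMulVec, det_add_vecMulVec hdet,
    dotProduct_inv_add_vecMulVec_mulVec hdet _ _ _ _ hc_ne, hc, Complex.re_mul_ofReal,
    Real.log_mul hC_re.ne' hu.ne', mulVec_smul, dotProduct_smul, smul_eq_mul,
    ← hC.inv.isHermitian.star_dotProduct_mulVec v y, Complex.star_def, mul_assoc,
    Complex.conj_mul', show (γ : ℂ) * ((‖w‖ : ℂ) ^ 2) / ((1 + γ * s : ℝ) : ℂ) =
      ((γ * ‖w‖ ^ 2 / (1 + γ * s) : ℝ) : ℂ) by push_cast; rfl,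
    Complex.sub_re, Complex.ofReal_re]
  ring

end RankOneObjective

theorem log_sub_sub_one_le_log_one_add_sub {T γ s q : ℝ} (hT : 0 < T) (hγ : 0 ≤ γ)
    (hs : 0 ≤ s) (hq : q ≤ T * s) :
    Real.log T - (T - 1) ≤ Real.log (1 + γ * s) - γ * q / (1 + γ * s) := by
  have hu : 0 < 1 + γ * s := by positivity
  have hfrac : γ * q / (1 + γ * s) ≤ T - T / (1 + γ * s) := by
    rw [div_le_iff₀ hu, sub_mul, div_mul_cancel₀ _ hu.ne']
    nlinarith
  have hlog := Real.log_le_sub_one_of_pos (div_pos hT hu)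
  rw [Real.log_div hT.ne' hu.ne'] at hlog
  linarith

theorem log_one_add_sub_at_optimum {s q : ℝ} (hs : s ≠ 0) (hq : q ≠ 0) :
    Real.log (1 + (q - s) / s ^ 2 * s) - (q - s) / s ^ 2 * q / (1 + (q - s) / s ^ 2 * s) =
      Real.log (q / s) - (q / s - 1) := by
  have hopt : 1 + (q - s) / s ^ 2 * s = q / s := by
    field_simp
    ring
  rw [hopt]
  congr 1
  field_simp

theorem stmt_9_general (n : ℕ)
    (Cm : Matrix (Fin n) (Fin n) ℂ) (hCm : Cm.PosDef)
    (y : Fin n → ℂ)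
    (A : Type*)
    (φ : A → Fin n → ℂ) (hφ : ∀ a, φ a ≠ 0)
    (s q : A → ℝ)
    (hs : ∀ a, (s a : ℂ) = star (φ a) ⬝ᵥ Cm⁻¹.mulVec (φ a))
    (hq : ∀ a, q a = ‖star (φ a) ⬝ᵥ Cm⁻¹.mulVec y‖ ^ 2)
    (F : A → ℝ → ℝ)
    (hF : ∀ (a : A) (γ : ℝ), 0 ≤ γ →
      F a γ = Real.log ((Cm + (γ : ℂ) • Matrix.vecMulVec (φ a) (star (φ a))).det.re) +
        (star y ⬝ᵥ ((Cm + (γ : ℂ) • Matrix.vecMulVec (φ a) (star (φ a)))⁻¹.mulVec y)).re)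
    (astar : A) (hastar : s astar < q astar)
    (hmax : ∀ a : A, s a < q a → q a / s a ≤ q astar / s astar) :
    (∀ a : A, 0 < s a) ∧
    ∀ (a : A) (γ : ℝ), 0 ≤ γ →
      F astar ((q astar - s astar) / (s astar) ^ 2) ≤ F a γ := by
  have hs_pos : ∀ a, 0 < s a := fun a => by
    have := hCm.inv.dotProduct_mulVec_pos (hφ a)
    rwa [← hs a, Complex.zero_lt_real] at this
  have hF_eq : ∀ a γ, 0 ≤ γ → F a γ = Real.log Cm.det.re + (star y ⬝ᵥ Cm⁻¹ *ᵥ y).re +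
      (Real.log (1 + γ * s a) - γ * q a / (1 + γ * s a)) := fun a γ hγ =>
    (hF a γ hγ).trans (hq a ▸ rankOneObjective_eq hCm y (φ a) hγ (hs a))
  refine ⟨hs_pos, fun a γ hγ => ?_⟩
  set T := q astar / s astar
  have hT : 1 < T := (one_lt_div (hs_pos astar)).2 hastar
  have hq_le : q a ≤ T * s a := by
    rcases lt_or_ge (s a) (q a) with h | h
    · exact (div_le_iff₀ (hs_pos a)).1 (hmax a h)
    · nlinarith [hs_pos a]
  rw [hF_eq _ _ (div_nonneg (sub_nonneg.2 hastar.le) (sq_nonneg _)), hF_eq a γ hγ,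
    log_one_add_sub_at_optimum (hs_pos astar).ne' ((hs_pos astar).trans hastar).ne']
  exact (add_le_add_iff_left _).2
    (log_sub_sub_one_le_log_one_add_sub (zero_lt_one.trans hT) hγ (hs_pos a).le hq_le)

/-- The grid adjustment step of GRASBI never increases the full maximum-likelihood
objective: with `F(a,γ) = log det(C₋ + γ·φ(a)φ(a)ᴴ) + yᴴ(C₋ + γ·φ(a)φ(a)ᴴ)⁻¹y`,
`s(a) = φ(a)ᴴ C₋⁻¹ φ(a) > 0`, `q(a) = |φ(a)ᴴ C₋⁻¹ y|²`, if `B = {a : q(a) > s(a)}`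
is nonempty and `a*` maximizes `q/s` over `B`, then `(a*, γ*)` with
`γ* = (q(a*) − s(a*))/s(a*)²` minimizes `F` over `A × [0,∞)`. -/
theorem stmt_9 (n : ℕ) (hn : 0 < n)
    (Cm : Matrix (Fin n) (Fin n) ℂ) (hCm : Cm.PosDef)
    (y : Fin n → ℂ)
    (A : Type*) [Fintype A] [Nonempty A]
    (φ : A → Fin n → ℂ) (hφ : ∀ a, φ a ≠ 0)
    (s q : A → ℝ)
    (hs : ∀ a, (s a : ℂ) = star (φ a) ⬝ᵥ Cm⁻¹.mulVec (φ a))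
    (hq : ∀ a, q a = ‖star (φ a) ⬝ᵥ Cm⁻¹.mulVec y‖ ^ 2)
    (F : A → ℝ → ℝ)
    (hF : ∀ (a : A) (γ : ℝ), 0 ≤ γ →
      F a γ = Real.log ((Cm + (γ : ℂ) • Matrix.vecMulVec (φ a) (star (φ a))).det.re) +
        (star y ⬝ᵥ ((Cm + (γ : ℂ) • Matrix.vecMulVec (φ a) (star (φ a)))⁻¹.mulVec y)).re)
    (astar : A) (hastar : s astar < q astar)
    (hmax : ∀ a : A, s a < q a → q a / s a ≤ q astar / s astar) :
    (∀ a : A, 0 < s a) ∧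
    ∀ (a : A) (γ : ℝ), 0 ≤ γ →
      F astar ((q astar - s astar) / (s astar) ^ 2) ≤ F a γ :=
  stmt_9_general n Cm hCm y A φ hφ s q hs hq F hF astar hastar hmax
end
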